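/- In Newton's model, the sequence (X_n) is conditionally identically distributed (c.i.d.): for every n ≥ 0, every k ≥ 1 and every bounded measurable h : 𝕏 → ℝ, E[h(X_{n+k}) | F_n] = E[h(X_{n+1}) | F_n] P-almost surely, where (F_n) is the natural filtration of (X_n). -/

import Mathlib

open MeasureTheory ProbabilityTheory Filter Set
open scoped ENNReal NNReal Topology

noncomputable section

/-- Newton's model: `X n` are the observables (indexed from 1; index 0 unused),
`th n` the latent parameters, `f x t` the kernel density of `x` given `t` w.r.t. `μ`,
`G0` the initial guess, `α` the weight sequence, `F` the natural filtration of `X`,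
and `G n` Newton's recursively defined random (predictive) probability measures. -/
structure NewtonModel (Ω : Type*) [mΩ : MeasurableSpace Ω]
    (𝕏 : Type*) [m𝕏 : MeasurableSpace 𝕏]
    (Θ : Type*) [mΘ : MeasurableSpace Θ] where
  P : Measure Ω
  probP : IsProbabilityMeasure P
  X : ℕ → Ω → 𝕏
  meas_X : ∀ n, Measurable (X n)
  th : ℕ → Ω → Θ
  meas_th : ∀ n, Measurable (th n)
  f : 𝕏 → Θ → ℝ≥0∞
  meas_f : Measurable (Function.uncurry f)
  μ : Measure 𝕏
  sfin : SigmaFinite μ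
  f_dens : ∀ t, ∫⁻ x, f x t ∂μ = 1
  G0 : Measure Θ
  probG0 : IsProbabilityMeasure G0
  α : ℕ → ℝ
  α_mem : ∀ n, α n ∈ Set.Ioo (0 : ℝ) 1
  /-- the natural filtration of `X` : `F n = σ(X 1, …, X n)` -/
  F : ℕ → MeasurableSpace Ω
  F_def : ∀ n, F n = ⨆ i ∈ Set.Icc 1 n, MeasurableSpace.comap (X i) m𝕏
  /-- Newton's sequence of random measures -/
  G : ℕ → Ω → Measure Θ
  G_zero : ∀ ω, G 0 ω = G0
  G_rec : ∀ n ω, G (n + 1) ω =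
      ENNReal.ofReal (1 - α (n + 1)) • G n ω +
      ENNReal.ofReal (α (n + 1)) •
        ((∫⁻ t, f (X (n + 1) ω) t ∂(G n ω))⁻¹ • (G n ω).withDensity (f (X (n + 1) ω)))
  meas_G : ∀ n, ∀ A : Set Θ, MeasurableSet A → Measurable fun ω => G n ω A
  /-- `θ₁ ∼ G₀` -/
  th_one : Measure.map (th 1) P = G0
  /-- the conditional distribution of `θ_{n+1}` given `X_{1:n}` is `G n` -/
  cond_th : ∀ (n : ℕ) (A : Set Θ), MeasurableSet A →
      (fun ω => (G n ω A).toReal)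
        =ᵐ[P] P[fun ω => A.indicator (fun _ => (1 : ℝ)) (th (n + 1) ω) | F n]
  /-- the conditional distribution of `X_{n+1}` given `(θ_k)_k` and `X_{1:n}` has
  density `f (· | θ_{n+1})` with respect to `μ` -/
  cond_X : ∀ (n : ℕ) (B : Set 𝕏), MeasurableSet B →
      (fun ω => (∫⁻ x in B, f x (th (n + 1) ω) ∂μ).toReal)
        =ᵐ[P] P[fun ω => B.indicator (fun _ => (1 : ℝ)) (X (n + 1) ω) |
            (⨆ k, MeasurableSpace.comap (th k) mΘ) ⊔ F n]

/-- weak convergence of a sequence of measures -/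
def WeakLim {Θ : Type*} [MeasurableSpace Θ] [TopologicalSpace Θ]
    (Gs : ℕ → Measure Θ) (H : Measure Θ) : Prop :=
  ∀ g : BoundedContinuousFunction Θ ℝ,
    Tendsto (fun n => ∫ t, g t ∂(Gs n)) atTop (𝓝 (∫ t, g t ∂H))

/-!
Write `ψₙ = ∫ q dGₙ` (`predictiveMean`), where `q θ = ∫ h f(·|θ) dμ` (`likelihoodMean`).
Conditioning first on all the `θ`'s shows that `Gₙ` followed by the likelihood is the conditional
law of `X_{n+1}` given `Fₙ`, so `E[h(X_{n+1}) | Fₙ] = ψₙ`. Newton's recursion gives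
`ψ_{n+1} = (1 - α) ψₙ + α · (Bayes posterior mean of q after observing X_{n+1})`, and averaging a
posterior mean over the prior predictive law returns the prior mean `ψₙ`; hence `(ψₙ)` is an
`(Fₙ)`-martingale. By the tower property, `E[h(X_{n+k}) | Fₙ] = E[ψ_{n+k-1} | Fₙ] = ψₙ`.
Working with lower integrals needs `h ≥ 0`, which a constant shift arranges.
-/

section CondDistrib

variable {Ω S : Type*} {m₀ : MeasurableSpace Ω} [mS : MeasurableSpace S]

def IsCondDistrib (P : Measure[m₀] Ω) (m : MeasurableSpace Ω) (Y : Ω → S) (κ : Kernel[m] Ω S) :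
    Prop :=
  ∀ A, MeasurableSet A → (fun ω => (κ ω A).toReal)
    =ᵐ[P] P[fun ω => A.indicator (fun _ => (1 : ℝ)) (Y ω) | m]

variable {m : MeasurableSpace Ω} {P : Measure[m₀] Ω} [IsProbabilityMeasure P] {Y : Ω → S}
  {κ : Kernel Ω S} [IsMarkovKernel κ]

lemma IsCondDistrib.setLIntegral_eq (hκ : IsCondDistrib P m Y κ) (hm : m ≤ m₀)
    (hY : Measurable[m₀] Y) {s : Set Ω} (hs : MeasurableSet[m] s) {A : Set S}
    (hA : MeasurableSet A) :
    ∫⁻ ω in s, κ ω A ∂P = P (s ∩ Y ⁻¹' A) := by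
  have hκA : Measurable[m₀] fun ω => κ ω A := (κ.measurable_coe hA).mono hm le_rfl
  have hind : (fun ω => A.indicator (fun _ => (1 : ℝ)) (Y ω)) = (Y ⁻¹' A).indicator 1 := rfl
  have hlt : ∫⁻ ω in s, κ ω A ∂P < ∞ :=
    (setLIntegral_mono' (hm s hs) fun ω _ => prob_le_one).trans_lt (by simp)
  refine (ENNReal.toReal_eq_toReal_iff' hlt.ne (measure_ne_top P _)).1 ?_
  calc (∫⁻ ω in s, κ ω A ∂P).toReal = ∫ ω in s, (κ ω A).toReal ∂P :=
        (integral_toReal hκA.aemeasurable (ae_of_all _ fun ω => measure_lt_top _ _)).symm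
    _ = ∫ ω in s, P[(Y ⁻¹' A).indicator 1 | m] ω ∂P :=
        setIntegral_congr_ae (hm s hs) (by filter_upwards [hκ A hA] with ω hω _; rw [hω, hind])
    _ = ∫ ω in s, (Y ⁻¹' A).indicator 1 ω ∂P :=
        setIntegral_condExp hm ((integrable_const 1).indicator (hY hA)) hs
    _ = (P (s ∩ Y ⁻¹' A)).toReal := by
        rw [integral_indicator_one (hY hA), measureReal_restrict_apply (hY hA), inter_comm]
        rfl

lemma IsCondDistrib.map_prodMk_eq_compProd (hκ : IsCondDistrib P m Y κ) (hm : m ≤ m₀)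
    (hY : Measurable[m₀] Y) :
    @Measure.map Ω (Ω × S) m₀ _ (fun ω => (ω, Y ω)) P = P.trim hm ⊗ₘ κ := by
  have hpair : Measurable[m₀] fun ω => (ω, Y ω) := (measurable_id'' hm).prodMk hY
  have : IsProbabilityMeasure (P.trim hm) :=
    ⟨by rw [trim_measurableSet_eq hm .univ]; exact measure_univ⟩
  have := @Measure.isProbabilityMeasure_map Ω (Ω × S) m₀ _ P _ _ hpair.aemeasurable
  refine ext_of_generate_finite _ generateFrom_prod.symm isPiSystem_prod ?_ (by simp)
  rintro _ ⟨s, hs, A, hA, rfl⟩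
  rw [Measure.map_apply hpair (hs.prod hA), Measure.compProd_apply_prod hs hA,
    setLIntegral_trim hm (κ.measurable_coe hA) hs, hκ.setLIntegral_eq hm hY hs hA]
  rfl

theorem IsCondDistrib.condExp_ae_eq_integral (hκ : IsCondDistrib P m Y κ) (hm : m ≤ m₀)
    (hY : Measurable[m₀] Y) {H : Ω × S → ℝ} (hH : Measurable[m.prod mS] H) {C : ℝ}
    (hC : ∀ p, |H p| ≤ C) :
    P[fun ω => H (ω, Y ω) | m] =ᵐ[P] fun ω => ∫ y, H (ω, y) ∂(κ ω) := by
  have hpair : Measurable[m₀] fun ω => (ω, Y ω) := (measurable_id'' hm).prodMk hY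
  have hlaw := hκ.map_prodMk_eq_compProd hm hY
  have hint : Integrable H (P.trim hm ⊗ₘ κ) :=
    .of_bound hH.aestronglyMeasurable C (ae_of_all _ hC)
  have hg : StronglyMeasurable fun ω => ∫ y, H (ω, y) ∂(κ ω) :=
    hH.stronglyMeasurable.integral_kernel_prod_right'
  have hg_le (ω : Ω) : ‖∫ y, H (ω, y) ∂(κ ω)‖ ≤ C := by
    simpa using norm_integral_le_of_norm_le_const (μ := κ ω)
      (ae_of_all _ fun y => (Real.norm_eq_abs (H (ω, y))).trans_le (hC (ω, y)))
  refine (ae_eq_condExp_of_forall_setIntegral_eq hm ?_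
    (fun s _ _ => (Integrable.of_bound (hg.mono hm).aestronglyMeasurable C
      (ae_of_all _ hg_le)).integrableOn) (fun s hs _ => ?_) hg.aestronglyMeasurable).symm
  · exact (integrable_map_measure (hlaw ▸ hint.1) hpair.aemeasurable).1 (hlaw ▸ hint)
  calc ∫ ω in s, ∫ y, H (ω, y) ∂(κ ω) ∂P
      = ∫ ω in s, ∫ y, H (ω, y) ∂(κ ω) ∂(P.trim hm) := setIntegral_trim hm hg hs
    _ = ∫ p in s ×ˢ univ, H p ∂(P.trim hm ⊗ₘ κ) := by
        rw [Measure.setIntegral_compProd hs .univ hint.integrableOn]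
        simp only [Measure.restrict_univ]
    _ = ∫ p in s ×ˢ univ, H p ∂(@Measure.map Ω (Ω × S) m₀ _ (fun ω => (ω, Y ω)) P) := by
        rw [hlaw]
    _ = ∫ ω in s, H (ω, Y ω) ∂P := by
        rw [setIntegral_map (hs.prod .univ) (hlaw ▸ hint.1) hpair.aemeasurable,
          mk_preimage_prod, preimage_id', preimage_univ, inter_univ]

end CondDistrib

theorem condExp_ae_eq_condExp_succ_of_martingale {Ω : Type*} {m₀ : MeasurableSpace Ω}
    {P : Measure Ω} [IsFiniteMeasure P] {ℱ : Filtration ℕ m₀} {Z : ℕ → Ω → ℝ}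
    (hZ : Martingale (fun n => P[Z (n + 1) | ℱ n]) ℱ P) (n : ℕ) {k : ℕ} (hk : 1 ≤ k) :
    P[Z (n + k) | ℱ n] =ᵐ[P] P[Z (n + 1) | ℱ n] := by
  obtain ⟨j, rfl⟩ := Nat.exists_eq_add_of_le' hk
  exact (ℱ.condExp_condExp (Z (n + j + 1)) (n.le_add_right j)).symm.trans
    (hZ.condExp_ae_eq (n.le_add_right j))

lemma ofReal_one_sub_add_ofReal {α : ℝ} (h0 : 0 ≤ α) (h1 : α ≤ 1) :
    ENNReal.ofReal (1 - α) + ENNReal.ofReal α = 1 := by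
  rw [← ENNReal.ofReal_add (by linarith) h0, sub_add_cancel, ENNReal.ofReal_one]

lemma ofReal_one_sub_mul_add_ofReal_mul_le {α : ℝ} (h0 : 0 ≤ α) (h1 : α ≤ 1)
    {a b c : ℝ≥0∞} (ha : a ≤ c) (hb : b ≤ c) :
    ENNReal.ofReal (1 - α) * a + ENNReal.ofReal α * b ≤ c :=
  calc ENNReal.ofReal (1 - α) * a + ENNReal.ofReal α * b
      ≤ ENNReal.ofReal (1 - α) * c + ENNReal.ofReal α * c := by gcongr
    _ = c := by rw [← add_mul, ofReal_one_sub_add_ofReal h0 h1, one_mul]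

section BayesUpdate

variable {Θ 𝕏 : Type*} [MeasurableSpace Θ] [MeasurableSpace 𝕏] {f : 𝕏 → Θ → ℝ≥0∞}
  {q : Θ → ℝ≥0∞}

/-- Bayes' posterior of `ν` given the observation `x`; Newton's recursion `G_rec` mixes `G n`
with `bayesUpdate (G n) f (X (n + 1))`. -/
def bayesUpdate (ν : Measure Θ) (f : 𝕏 → Θ → ℝ≥0∞) (x : 𝕏) : Measure Θ :=
  (∫⁻ t, f x t ∂ν)⁻¹ • ν.withDensity (f x)

lemma lintegral_bayesUpdate (hf : Measurable (Function.uncurry f)) (ν : Measure Θ) (x : 𝕏)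
    (hq : Measurable q) :
    ∫⁻ t, q t ∂(bayesUpdate ν f x) = (∫⁻ t, f x t * q t ∂ν) / ∫⁻ t, f x t ∂ν := by
  rw [bayesUpdate, lintegral_smul_measure,
    lintegral_withDensity_eq_lintegral_mul _ hf.of_uncurry_left hq, smul_eq_mul,
    ENNReal.div_eq_inv_mul]
  rfl

lemma lintegral_bayesUpdate_le (hf : Measurable (Function.uncurry f)) (ν : Measure Θ) (x : 𝕏)
    (hq : Measurable q) {c : ℝ≥0∞} (hqc : ∀ t, q t ≤ c) :
    ∫⁻ t, q t ∂(bayesUpdate ν f x) ≤ c := by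
  rw [lintegral_bayesUpdate hf ν x hq]
  refine ENNReal.div_le_of_le_mul ?_
  calc ∫⁻ t, f x t * q t ∂ν ≤ ∫⁻ t, f x t * c ∂ν := lintegral_mono fun t => by gcongr; exact hqc t
    _ = c * ∫⁻ t, f x t ∂ν := by rw [lintegral_mul_const _ hf.of_uncurry_left, mul_comm]

lemma bayesUpdate_univ_le_one (hf : Measurable (Function.uncurry f)) (ν : Measure Θ) (x : 𝕏) :
    bayesUpdate ν f x univ ≤ 1 := by
  simpa using lintegral_bayesUpdate_le hf ν x measurable_const (q := 1) fun _ => le_rfl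

lemma measurable_bayesUpdate {α : Type*} {mα : MeasurableSpace α} {κ : Kernel α Θ}
    [IsFiniteKernel κ] {x : α → 𝕏} (hx : Measurable x) (hf : Measurable (Function.uncurry f)) :
    Measurable fun a => bayesUpdate (κ a) f (x a) := by
  refine Measure.measurable_of_measurable_coe _ fun A hA => ?_
  have hfx : Measurable fun p : α × Θ => f (x p.1) p.2 :=
    hf.comp ((hx.comp measurable_fst).prodMk measurable_snd)
  simp_rw [← lintegral_indicator_one hA, lintegral_bayesUpdate hf _ _ (measurable_one.indicator hA)]
  have hnum : Measurable fun p : α × Θ => f (x p.1) p.2 * A.indicator 1 p.2 :=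
    hfx.mul ((measurable_one.indicator hA).comp measurable_snd)
  exact hnum.lintegral_kernel_prod_right'.div hfx.lintegral_kernel_prod_right'

theorem lintegral_lintegral_bayesUpdate (ν : Measure Θ) [IsFiniteMeasure ν] {μ : Measure 𝕏}
    [SFinite μ] (hf : Measurable (Function.uncurry f)) (hf_one : ∀ t, ∫⁻ x, f x t ∂μ = 1)
    (hq : Measurable q) :
    ∫⁻ x, ∫⁻ t, q t ∂(bayesUpdate ν f x) ∂(μ.withDensity fun x => ∫⁻ t, f x t ∂ν)
      = ∫⁻ t, q t ∂ν := by
  have hfq : Measurable (Function.uncurry fun x t => f x t * q t) := hf.mul (hq.comp measurable_snd)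
  have hc : Measurable fun x => ∫⁻ t, f x t ∂ν := hf.lintegral_prod_right'
  have hc_fin : ∀ᵐ x ∂μ, ∫⁻ t, f x t ∂ν ≠ ∞ := by
    refine (ae_lt_top hc ?_).mono fun x hx => hx.ne
    rw [lintegral_lintegral_swap hf.aemeasurable]
    simp [hf_one]
  have hratio : Measurable fun x => (∫⁻ t, f x t * q t ∂ν) / ∫⁻ t, f x t ∂ν :=
    hfq.lintegral_prod_right'.div hc
  simp_rw [lintegral_bayesUpdate hf ν _ hq]
  rw [lintegral_withDensity_eq_lintegral_mul _ hc hratio]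
  calc ∫⁻ x, (fun x => ∫⁻ t, f x t ∂ν) x * ((∫⁻ t, f x t * q t ∂ν) / ∫⁻ t, f x t ∂ν) ∂μ
      = ∫⁻ x, ∫⁻ t, f x t * q t ∂ν ∂μ := by
        refine lintegral_congr_ae (hc_fin.mono fun x hx =>
          ENNReal.mul_div_cancel' (fun h0 => ?_) fun h => absurd h hx)
        -- a vanishing normalizing constant forces `f x = 0` `ν`-a.e., hence a vanishing numerator
        have hf0 : f x =ᵐ[ν] 0 := (lintegral_eq_zero_iff hf.of_uncurry_left).1 h0
        simpa using lintegral_congr_ae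
          (hf0.mono fun t ht => by simp [ht] : _ =ᵐ[ν] fun _ => (0 : ℝ≥0∞))
    _ = ∫⁻ t, q t ∂ν := by
        rw [lintegral_lintegral_swap hfq.aemeasurable]
        simp_rw [lintegral_mul_const _ hf.of_uncurry_right, hf_one, one_mul]

end BayesUpdate

namespace NewtonModel

variable {Ω 𝕏 Θ : Type*} [mΩ : MeasurableSpace Ω] [m𝕏 : MeasurableSpace 𝕏]
  [mΘ : MeasurableSpace Θ] (M : NewtonModel Ω 𝕏 Θ)

lemma F_le (n : ℕ) : M.F n ≤ mΩ := by
  rw [M.F_def]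
  exact iSup₂_le fun i _ => (M.meas_X i).comap_le

lemma F_mono : Monotone M.F := fun n m hnm => by
  rw [M.F_def n, M.F_def m]
  exact biSup_mono fun i hi => ⟨hi.1, hi.2.trans hnm⟩

def filtration : Filtration ℕ mΩ := ⟨M.F, M.F_mono, M.F_le⟩

lemma measurable_X_succ (n : ℕ) : Measurable[M.F (n + 1)] (M.X (n + 1)) := by
  rw [measurable_iff_comap_le, M.F_def]
  exact le_iSup₂ (f := fun i (_ : i ∈ Icc 1 (n + 1)) => MeasurableSpace.comap (M.X i) m𝕏)
    (n + 1) ⟨n.succ_pos, le_rfl⟩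

lemma G_succ (n : ℕ) (ω : Ω) : M.G (n + 1) ω = ENNReal.ofReal (1 - M.α (n + 1)) • M.G n ω +
    ENNReal.ofReal (M.α (n + 1)) • bayesUpdate (M.G n ω) M.f (M.X (n + 1) ω) :=
  M.G_rec n ω

lemma G_univ_le_one (n : ℕ) (ω : Ω) : M.G n ω univ ≤ 1 := by
  induction n with
  | zero => have := M.probG0; simp [M.G_zero]
  | succ n ih =>
    obtain ⟨h0, h1⟩ := M.α_mem (n + 1)
    simp only [M.G_succ, Measure.add_apply, Measure.smul_apply, smul_eq_mul]
    exact ofReal_one_sub_mul_add_ofReal_mul_le h0.le h1.le ih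
      (bayesUpdate_univ_le_one M.meas_f _ _)

lemma measurable_G (n : ℕ) : Measurable[M.F n] (M.G n) := by
  induction n with
  | zero => simp only [funext M.G_zero]; exact measurable_const
  | succ n ih =>
    let κ : Kernel[M.F (n + 1)] Ω Θ := @Kernel.mk _ _ (M.F (n + 1)) _ (M.G n)
      (ih.mono (M.F_mono n.le_succ) le_rfl)
    have : IsFiniteKernel κ := ⟨⟨1, ENNReal.one_lt_top, M.G_univ_le_one n⟩⟩
    have hU := measurable_bayesUpdate (κ := κ) (M.measurable_X_succ n) M.meas_f
    refine Measure.measurable_of_measurable_coe _ fun A hA => ?_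
    simp only [M.G_succ, Measure.add_apply, Measure.smul_apply, smul_eq_mul]
    exact ((κ.measurable_coe hA).const_mul _).add
      (((Measure.measurable_coe hA).comp hU).const_mul _)

/-- `G n` is a.s. a probability measure (take `A = univ` in `cond_th`); replacing it by `G0` on the
exceptional set makes it an `F n`-measurable Markov kernel. -/
def mixingKernel (n : ℕ) : Kernel[M.F n] Ω Θ :=
  @Kernel.mk _ _ (M.F n) _ (fun ω => if M.G n ω univ = 1 then M.G n ω else M.G0) <|
    Measurable.ite
      ((Measure.measurable_coe .univ).comp (M.measurable_G n) (measurableSet_singleton 1))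
      (M.measurable_G n) measurable_const

lemma mixingKernel_apply (n : ℕ) (ω : Ω) :
    M.mixingKernel n ω = if M.G n ω univ = 1 then M.G n ω else M.G0 := rfl

instance (n : ℕ) : IsMarkovKernel (M.mixingKernel n) :=
  ⟨fun ω => by
    rw [mixingKernel_apply]
    split_ifs with h
    exacts [⟨h⟩, M.probG0]⟩

lemma mixingKernel_ae_eq (n : ℕ) : ∀ᵐ ω ∂M.P, M.mixingKernel n ω = M.G n ω := by
  have := M.probP
  have h := M.cond_th n univ .univ
  simp only [indicator_univ, condExp_const (M.F_le n)] at h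
  filter_upwards [h] with ω hω
  rw [mixingKernel_apply, if_pos ((ENNReal.toReal_eq_one_iff _).1 hω)]

def likelihood : Kernel Θ 𝕏 where
  toFun t := M.μ.withDensity fun x => M.f x t
  measurable' := Measure.measurable_of_measurable_coe _ fun B hB => by
    have := M.sfin
    simp_rw [withDensity_apply _ hB]
    exact (M.meas_f.comp measurable_swap).lintegral_prod_right'

lemma likelihood_apply (t : Θ) : M.likelihood t = M.μ.withDensity fun x => M.f x t := rfl

instance : IsMarkovKernel M.likelihood :=
  ⟨fun t => ⟨by rw [likelihood_apply, withDensity_apply _ .univ, Measure.restrict_univ, M.f_dens]⟩⟩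

def predictive (n : ℕ) : Kernel[M.F n] Ω 𝕏 := M.likelihood ∘ₖ M.mixingKernel n

instance (n : ℕ) : IsMarkovKernel (M.predictive n) := by
  unfold predictive
  infer_instance

lemma predictive_eq_withDensity (n : ℕ) (ω : Ω) :
    M.predictive n ω = M.μ.withDensity fun x => ∫⁻ t, M.f x t ∂(M.mixingKernel n ω) := by
  have := M.sfin
  ext B hB
  rw [predictive, Kernel.comp_apply' _ _ _ hB, withDensity_apply _ hB]
  simp_rw [likelihood_apply, withDensity_apply _ hB]
  exact lintegral_lintegral_swap (M.meas_f.comp measurable_swap).aemeasurable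

lemma isCondDistrib_mixingKernel (n : ℕ) :
    IsCondDistrib M.P (M.F n) (M.th (n + 1)) (M.mixingKernel n) := fun A hA => by
  filter_upwards [M.mixingKernel_ae_eq n, M.cond_th n A hA] with ω hω hA
  rw [hω, hA]

lemma isCondDistrib_predictive (n : ℕ) :
    IsCondDistrib M.P (M.F n) (M.X (n + 1)) (M.predictive n) := fun B hB => by
  have := M.probP
  have hB' : Measurable fun t => (M.likelihood t B).toReal :=
    (M.likelihood.measurable_coe hB).ennreal_toReal
  have hB'_le (t : Θ) : |(M.likelihood t B).toReal| ≤ 1 := by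
    rw [abs_of_nonneg ENNReal.toReal_nonneg]
    exact ENNReal.toReal_le_of_le_ofReal zero_le_one (ENNReal.ofReal_one ▸ prob_le_one)
  have hFθ : (⨆ k, MeasurableSpace.comap (M.th k) mΘ) ⊔ M.F n ≤ mΩ :=
    sup_le (iSup_le fun k => (M.meas_th k).comap_le) (M.F_le n)
  calc (fun ω => (M.predictive n ω B).toReal)
      = fun ω => ∫ t, (M.likelihood t B).toReal ∂(M.mixingKernel n ω) := funext fun ω => by
        rw [predictive, Kernel.comp_apply' _ _ _ hB, ← integral_toReal
          (M.likelihood.measurable_coe hB).aemeasurable (ae_of_all _ fun _ => measure_lt_top _ _)]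
    _ =ᵐ[M.P] M.P[fun ω => (M.likelihood (M.th (n + 1) ω) B).toReal | M.F n] :=
        ((M.isCondDistrib_mixingKernel n).condExp_ae_eq_integral (M.F_le n) (M.meas_th _)
          (H := fun p => (M.likelihood p.2 B).toReal) (hB'.comp measurable_snd)
          fun p => hB'_le p.2).symm
    _ =ᵐ[M.P] M.P[M.P[fun ω => B.indicator (fun _ => (1 : ℝ)) (M.X (n + 1) ω) |
          (⨆ k, MeasurableSpace.comap (M.th k) mΘ) ⊔ M.F n] | M.F n] :=
        condExp_congr_ae
          (by simpa only [likelihood_apply, withDensity_apply _ hB] using M.cond_X n B hB)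
    _ =ᵐ[M.P] M.P[fun ω => B.indicator (fun _ => (1 : ℝ)) (M.X (n + 1) ω) | M.F n] :=
        condExp_condExp_of_le le_sup_right hFθ

section Mean

variable {h : 𝕏 → ℝ} {C : ℝ≥0}

def likelihoodMean (h : 𝕏 → ℝ) (t : Θ) : ℝ≥0∞ :=
  ∫⁻ x, ENNReal.ofReal (h x) ∂(M.likelihood t)

def predictiveMean (h : 𝕏 → ℝ) (n : ℕ) (ω : Ω) : ℝ≥0∞ :=
  ∫⁻ t, M.likelihoodMean h t ∂(M.mixingKernel n ω)

lemma measurable_likelihoodMean (hh : Measurable h) : Measurable (M.likelihoodMean h) :=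
  (hh.ennreal_ofReal.comp measurable_snd).lintegral_kernel_prod_right'

lemma likelihoodMean_le (hC : ∀ x, h x ≤ C) (t : Θ) : M.likelihoodMean h t ≤ C :=
  (lintegral_mono fun x => (ENNReal.ofReal_le_ofReal (hC x)).trans_eq
    ENNReal.ofReal_coe_nnreal).trans_eq (by simp)

lemma predictiveMean_le (hC : ∀ x, h x ≤ C) (n : ℕ) (ω : Ω) : M.predictiveMean h n ω ≤ C :=
  (lintegral_mono fun t => M.likelihoodMean_le hC t).trans_eq (by simp)

lemma measurable_predictiveMean (hh : Measurable h) (n : ℕ) :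
    Measurable[M.F n] (M.predictiveMean h n) :=
  ((M.measurable_likelihoodMean hh).comp measurable_snd).lintegral_kernel_prod_right'

lemma condExp_X_succ_ae_eq_predictiveMean (hh : Measurable h) (h0 : ∀ x, 0 ≤ h x)
    (hC : ∀ x, h x ≤ C) (n : ℕ) :
    M.P[fun ω => h (M.X (n + 1) ω) | M.F n]
      =ᵐ[M.P] fun ω => (M.predictiveMean h n ω).toReal := by
  have := M.probP
  refine ((M.isCondDistrib_predictive n).condExp_ae_eq_integral (M.F_le n) (M.meas_X _)
    (H := fun p => h p.2) (hh.comp measurable_snd) (C := C)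
    fun p => (abs_of_nonneg (h0 p.2)).trans_le (hC p.2)).trans (ae_of_all _ fun ω => ?_)
  show ∫ x, h x ∂(M.predictive n ω) = _
  rw [integral_eq_lintegral_of_nonneg_ae (ae_of_all _ h0) hh.aestronglyMeasurable, predictive,
    Kernel.lintegral_comp _ _ _ hh.ennreal_ofReal]
  rfl

lemma predictiveMean_succ_ae_eq (n : ℕ) :
    M.predictiveMean h (n + 1) =ᵐ[M.P] fun ω =>
      ENNReal.ofReal (1 - M.α (n + 1)) * M.predictiveMean h n ω + ENNReal.ofReal (M.α (n + 1)) *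
        ∫⁻ t, M.likelihoodMean h t ∂(bayesUpdate (M.mixingKernel n ω) M.f (M.X (n + 1) ω)) := by
  filter_upwards [M.mixingKernel_ae_eq (n + 1), M.mixingKernel_ae_eq n] with ω h1 h2
  rw [predictiveMean, h1, M.G_succ, lintegral_add_measure, lintegral_smul_measure,
    lintegral_smul_measure, ← h2]
  rfl

lemma lintegral_lintegral_bayesUpdate_predictive (hh : Measurable h) (n : ℕ) (ω : Ω) :
    ∫⁻ x, ∫⁻ t, M.likelihoodMean h t ∂(bayesUpdate (M.mixingKernel n ω) M.f x)
      ∂(M.predictive n ω) = M.predictiveMean h n ω := by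
  have := M.sfin
  rw [predictive_eq_withDensity]
  exact lintegral_lintegral_bayesUpdate _ M.meas_f M.f_dens (M.measurable_likelihoodMean hh)

theorem condExp_predictiveMean_succ_ae_eq (hh : Measurable h) (hC : ∀ x, h x ≤ C) (n : ℕ) :
    M.P[fun ω => (M.predictiveMean h (n + 1) ω).toReal | M.F n]
      =ᵐ[M.P] fun ω => (M.predictiveMean h n ω).toReal := by
  have := M.probP
  obtain ⟨hα0, hα1⟩ := M.α_mem (n + 1)
  set U : Ω × 𝕏 → ℝ≥0∞ := fun p => ENNReal.ofReal (1 - M.α (n + 1)) * M.predictiveMean h n p.1 +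
    ENNReal.ofReal (M.α (n + 1)) *
      ∫⁻ t, M.likelihoodMean h t ∂(bayesUpdate (M.mixingKernel n p.1) M.f p.2) with hU
  have hU_le (p : Ω × 𝕏) : U p ≤ C :=
    ofReal_one_sub_mul_add_ofReal_mul_le hα0.le hα1.le (M.predictiveMean_le hC n p.1)
      (lintegral_bayesUpdate_le M.meas_f _ _ (M.measurable_likelihoodMean hh)
        (M.likelihoodMean_le hC))
  have hU_meas : Measurable[(M.F n).prod m𝕏] U :=
    (((M.measurable_predictiveMean hh n).comp measurable_fst).const_mul _).add
      (((Measure.measurable_lintegral (M.measurable_likelihoodMean hh)).comp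
        (measurable_bayesUpdate (κ := Kernel.prodMkRight 𝕏 (M.mixingKernel n)) measurable_snd
          M.meas_f)).const_mul _)
  calc M.P[fun ω => (M.predictiveMean h (n + 1) ω).toReal | M.F n]
      =ᵐ[M.P] M.P[fun ω => (U (ω, M.X (n + 1) ω)).toReal | M.F n] :=
        condExp_congr_ae ((M.predictiveMean_succ_ae_eq (h := h) n).mono fun ω hω =>
          congrArg ENNReal.toReal hω)
    _ =ᵐ[M.P] fun ω => ∫ x, (U (ω, x)).toReal ∂(M.predictive n ω) :=
        (M.isCondDistrib_predictive n).condExp_ae_eq_integral (M.F_le n) (M.meas_X _)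
          hU_meas.ennreal_toReal (C := C) fun p => by
            rw [abs_of_nonneg ENNReal.toReal_nonneg]
            exact ENNReal.toReal_le_coe_of_le_coe (hU_le p)
    _ = fun ω => (M.predictiveMean h n ω).toReal := funext fun ω => by
        have hUω : Measurable fun x => U (ω, x) := hU_meas.comp measurable_prodMk_left
        rw [integral_toReal hUω.aemeasurable
          (ae_of_all _ fun x => (hU_le _).trans_lt ENNReal.coe_lt_top)]
        congr 1
        simp only [hU]
        rw [lintegral_add_left measurable_const, lintegral_const, measure_univ, mul_one,
          lintegral_const_mul' _ _ ENNReal.ofReal_ne_top,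
          M.lintegral_lintegral_bayesUpdate_predictive hh, ← add_mul,
          ofReal_one_sub_add_ofReal hα0.le hα1.le, one_mul]

theorem martingale_condExp_X_succ (hh : Measurable h) (h0 : ∀ x, 0 ≤ h x)
    (hC : ∀ x, h x ≤ C) :
    Martingale (fun n => M.P[fun ω => h (M.X (n + 1) ω) | M.filtration n]) M.filtration M.P := by
  have := M.probP
  refine martingale_nat (fun n => stronglyMeasurable_condExp) (fun n => integrable_condExp)
    fun n => ?_
  calc M.P[fun ω => h (M.X (n + 1) ω) | M.F n]
      =ᵐ[M.P] fun ω => (M.predictiveMean h n ω).toReal :=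
        M.condExp_X_succ_ae_eq_predictiveMean hh h0 hC n
    _ =ᵐ[M.P] M.P[fun ω => (M.predictiveMean h (n + 1) ω).toReal | M.F n] :=
        (M.condExp_predictiveMean_succ_ae_eq hh hC n).symm
    _ =ᵐ[M.P] M.P[M.P[fun ω => h (M.X (n + 1 + 1) ω) | M.F (n + 1)] | M.F n] :=
        condExp_congr_ae (M.condExp_X_succ_ae_eq_predictiveMean hh h0 hC (n + 1)).symm

end Mean

end NewtonModel

theorem newton_X_cid_general
    {Ω 𝕏 Θ : Type*} [MeasurableSpace Ω]
    [MeasurableSpace 𝕏]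
    [MeasurableSpace Θ]
    (M : NewtonModel Ω 𝕏 Θ) :
    ∀ (h : 𝕏 → ℝ), Measurable h → (∃ C : ℝ, ∀ x, |h x| ≤ C) →
      ∀ (n k : ℕ), 1 ≤ k →
        M.P[fun ω => h (M.X (n + k) ω) | M.F n]
          =ᵐ[M.P] M.P[fun ω => h (M.X (n + 1) ω) | M.F n] := by
  rintro h hh ⟨C, hC⟩ n k hk
  have := M.probP
  have hbound (x : 𝕏) : -|C| ≤ h x ∧ h x ≤ |C| := abs_le.1 ((hC x).trans (le_abs_self C))
  have hcid : M.P[fun ω => h (M.X (n + k) ω) + |C| | M.F n]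
      =ᵐ[M.P] M.P[fun ω => h (M.X (n + 1) ω) + |C| | M.F n] :=
    condExp_ae_eq_condExp_succ_of_martingale (ℱ := M.filtration)
      (Z := fun i ω => h (M.X i ω) + |C|)
      (M.martingale_condExp_X_succ (C := 2 * Real.nnabs C) (hh.add_const _)
        (fun x => by linarith [hbound x]) fun x => by push_cast; linarith [hbound x]) n hk
  have hshift (i : ℕ) : M.P[fun ω => h (M.X i ω) + |C| | M.F n]
      =ᵐ[M.P] M.P[fun ω => h (M.X i ω) | M.F n] + fun _ => |C| :=
    (condExp_add (.of_bound (hh.comp (M.meas_X i)).aestronglyMeasurable C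
      (ae_of_all _ fun ω => hC _)) (integrable_const _) _).trans
      (by rw [condExp_const (M.F_le n)]; rfl)
  filter_upwards [hcid, hshift (n + k), hshift (n + 1)] with ω h1 h2 h3
  simp only [Pi.add_apply] at h2 h3
  linarith

/-- In Newton's model, the sequence `(X n)` is conditionally identically distributed:
for every `n ≥ 0`, `k ≥ 1` and every bounded measurable `h : 𝕏 → ℝ`,
`E[h(X_{n+k}) | F n] = E[h(X_{n+1}) | F n]` `P`-almost surely. -/
theorem newton_X_cid
    {Ω 𝕏 Θ : Type*} [MeasurableSpace Ω]
    [MeasurableSpace 𝕏] [StandardBorelSpace 𝕏]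
    [MeasurableSpace Θ] [StandardBorelSpace Θ]
    (M : NewtonModel Ω 𝕏 Θ) :
    ∀ (h : 𝕏 → ℝ), Measurable h → (∃ C : ℝ, ∀ x, |h x| ≤ C) →
      ∀ (n k : ℕ), 1 ≤ k →
        M.P[fun ω => h (M.X (n + k) ω) | M.F n]
          =ᵐ[M.P] M.P[fun ω => h (M.X (n + 1) ω) | M.F n] :=
  newton_X_cid_general M
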